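/- arXiv:2509.20539 — 3 statements merged into one kernel-verified Lean document; each statement's English description precedes it below -/
import Mathlib

section
/- Let R be a division ring, X, Y : Set α, and A : Matrix X Y R. For I ⊆ Y, call I independent if the columns of A indexed by I are linearly independent over R (as rows of Aᵀ restricted to Y ↓∩ I). Then this independence predicate satisfies the augmentation property: for all I, J ⊆ Y with I independent but not maximal among independent sets, and J maximal among independent sets, there exists x ∈ J \ I such that I ∪ {x} is independent. -/
open scoped Set.Notation

/-!
Over a division ring, an independent set of columns is maximal exactly when it spans every
column. If no column of `J \ I` could be added to `I`, every column of `J` would lie in the span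
of the columns of `I`; since `J` is maximal, its columns span all columns, so `I` would be
maximal as well.
-/

/-- The independence predicate of the vector matroid of a matrix `A : Matrix X Y R`:
a set `I` is independent iff `I ⊆ Y` and the columns of `A` indexed by `I` are
linearly independent over `R`. -/
def Matrix.IndepCols {α R : Type*} {X Y : Set α} [Semiring R]
    (A : Matrix X Y R) (I : Set α) : Prop :=
  I ⊆ Y ∧ LinearIndependent R (fun i : (Y ↓∩ I) => A.transpose i.val)

open Set Submodule

section LinearIndepOn

variable {ι K V : Type*} [DivisionRing K] [AddCommGroup V] [Module K V] {v : ι → V}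
  {s t : Set ι}

theorem LinearIndepOn.maximal_iff (hs : LinearIndepOn K v s) :
    Maximal (LinearIndepOn K v) s ↔ ∀ x, v x ∈ span K (v '' s) := by
  rw [maximal_iff_forall_insert fun _ _ ht hst ↦ ht.mono hst]
  simp only [hs, true_and, hs.mem_span_iff]
  exact forall_congr' fun x ↦ not_imp_not

theorem LinearIndepOn.exists_insert_of_not_maximal (hs : LinearIndepOn K v s)
    (hs_max : ¬ Maximal (LinearIndepOn K v) s) (ht : Maximal (LinearIndepOn K v) t) :
    ∃ x ∈ t \ s, LinearIndepOn K v (insert x s) := by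
  by_contra! h
  have hts : span K (v '' t) ≤ span K (v '' s) := span_le.2 <| by
    rintro _ ⟨x, hxt, rfl⟩
    exact hs.mem_span_iff.2 fun hx ↦ by_contra fun hxs ↦ h x ⟨hxt, hxs⟩ hx
  exact hs_max <| hs.maximal_iff.2 fun x ↦ hts <| ht.prop.maximal_iff.1 ht x

end LinearIndepOn

namespace Matrix

variable {α R : Type*} {X Y : Set α} [Semiring R] {A : Matrix X Y R} {S : Set Y}

theorem indepCols_image_val : A.IndepCols (Subtype.val '' S) ↔ LinearIndepOn R Aᵀ S := by
  rw [IndepCols, preimage_image_eq S Subtype.val_injective]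
  exact and_iff_right (image_subset_iff.2 fun y _ ↦ y.2)

theorem maximal_indepCols_image_val_iff :
    Maximal A.IndepCols (Subtype.val '' S) ↔ Maximal (LinearIndepOn R Aᵀ) S := by
  let f : Set Y ↪o Set α :=
    .ofMapLEIff (Subtype.val '' ·) fun _ _ ↦ image_subset_image_iff Subtype.val_injective
  have := f.maximal_apply_mem_iff (t := {I | A.IndepCols I}) (x := S) fun I hI ↦
    ⟨Y ↓∩ I, image_preimage_eq_of_subset (by simpa using hI.1)⟩
  simpa [f, indepCols_image_val] using this

end Matrix

/-- The column-independence predicate satisfies the augmentation property: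
if `I` is independent but not maximal and `J` is maximal independent, then
some `x ∈ J \ I` can be added to `I` keeping it independent. -/
theorem Matrix.indepCols_aug {α R : Type*} {X Y : Set α} [DivisionRing R]
    (A : Matrix X Y R) (I J : Set α) (hI : A.IndepCols I)
    (hInmax : ¬ Maximal A.IndepCols I) (hJmax : Maximal A.IndepCols J) :
    ∃ x ∈ J \ I, A.IndepCols (insert x I) := by
  obtain ⟨S, rfl⟩ := subset_range_iff_exists_image_eq.1 (hI.1.trans Subtype.range_val.ge)
  obtain ⟨T, rfl⟩ := subset_range_iff_exists_image_eq.1 (hJmax.prop.1.trans Subtype.range_val.ge)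
  rw [indepCols_image_val] at hI
  rw [maximal_indepCols_image_val_iff] at hInmax hJmax
  obtain ⟨x, hx, hxS⟩ := hI.exists_insert_of_not_maximal hInmax hJmax
  refine ⟨x, image_sdiff Subtype.val_injective .. ▸ mem_image_of_mem _ hx, ?_⟩
  rwa [← image_insert_eq, indepCols_image_val]
end

section
/- Let R be a commutative ring and let A₁ : Matrix X₁ Y₁ R and A₂ : Matrix X₂ Y₂ R. The block-diagonal matrix Matrix.fromBlocks A₁ 0 0 A₂ is totally unimodular if and only if both A₁ and A₂ are totally unimodular. -/
private lemma signType_range_mul {R : Type*} [CommRing R] {a b : R}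
    (ha : a ∈ Set.range SignType.cast) (hb : b ∈ Set.range SignType.cast) :
    a * b ∈ Set.range SignType.cast := by
  obtain ⟨s, hs⟩ := ha
  obtain ⟨t, ht⟩ := hb
  exact ⟨s * t, by rw [SignType.coe_mul, hs, ht]⟩

private lemma signType_range_unit_mul {R : Type*} [CommRing R] {a : R} (u : ℤˣ)
    (ha : a ∈ Set.range SignType.cast) :
    ((u : ℤ) : R) * a ∈ Set.range SignType.cast := by
  apply signType_range_mul _ ha
  rcases Int.units_eq_one_or u with h | h <;> rw [h]
  · exact ⟨1, by simp⟩
  · exact ⟨-1, by simp⟩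

/-- A block-diagonal matrix is totally unimodular iff both diagonal blocks are
totally unimodular. -/
theorem Matrix.fromBlocks_isTotallyUnimodular_iff {X₁ Y₁ X₂ Y₂ R : Type*} [CommRing R]
    (A₁ : Matrix X₁ Y₁ R) (A₂ : Matrix X₂ Y₂ R) :
    (Matrix.fromBlocks A₁ 0 0 A₂).IsTotallyUnimodular ↔
      A₁.IsTotallyUnimodular ∧ A₂.IsTotallyUnimodular := by
  constructor
  · intro hA
    constructor
    · have h := hA.submatrix Sum.inl Sum.inl
      have e : (Matrix.fromBlocks A₁ 0 0 A₂).submatrix (Sum.inl : X₁ → X₁ ⊕ X₂)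
          (Sum.inl : Y₁ → Y₁ ⊕ Y₂) = A₁ := by ext i j; simp
      rwa [e] at h
    · have h := hA.submatrix Sum.inr Sum.inr
      have e : (Matrix.fromBlocks A₁ 0 0 A₂).submatrix (Sum.inr : X₂ → X₁ ⊕ X₂)
          (Sum.inr : Y₂ → Y₁ ⊕ Y₂) = A₂ := by ext i j; simp
      rwa [e] at h
  · rintro ⟨hA₁, hA₂⟩
    rw [Matrix.isTotallyUnimodular_iff]
    intro k f g
    classical
    set M := (Matrix.fromBlocks A₁ 0 0 A₂).submatrix f g with hM
    set P : Finset (Fin k) := Finset.univ.filter (fun i => (f i).isLeft) with hP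
    set Q : Finset (Fin k) := Finset.univ.filter (fun j => (g j).isLeft) with hQ
    -- Zero entries of M across the blocks
    have hM0 : ∀ i j : Fin k, (f i).isLeft → ¬ (g j).isLeft → M i j = 0 := by
      intro i j hi hj
      rw [hM]
      cases hfi : f i with
      | inl x =>
        cases hgj : g j with
        | inl y => rw [hfi] at hi; rw [hgj] at hj; simp at hj
        | inr y => simp [Matrix.submatrix, hfi, hgj]
      | inr x => rw [hfi] at hi; simp at hi
    have hM0' : ∀ i j : Fin k, ¬ (f i).isLeft → (g j).isLeft → M i j = 0 := by
      intro i j hi hj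
      rw [hM]
      cases hfi : f i with
      | inl x => rw [hfi] at hi; simp at hi
      | inr x =>
        cases hgj : g j with
        | inl y => simp [Matrix.submatrix, hfi, hgj]
        | inr y => rw [hgj] at hj; simp at hj
    rcases lt_trichotomy P.card Q.card with hc | hc | hc
    · -- more "left" columns than rows: det = 0
      refine ⟨0, ?_⟩
      rw [SignType.coe_zero, eq_comm, Matrix.det_apply]
      apply Finset.sum_eq_zero
      intro σ _
      have : ∃ x ∈ Q.image σ, x ∉ P := by
        by_contra hcon
        push_neg at hcon
        have := Finset.card_le_card hcon
        rw [Finset.card_image_of_injective _ σ.injective] at this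
        omega
      obtain ⟨x, hxQ, hxP⟩ := this
      obtain ⟨j, hjQ, rfl⟩ := Finset.mem_image.mp hxQ
      have hzero : M (σ j) j = 0 := by
        apply hM0'
        · intro h
          exact hxP (by simp [hP, h])
        · simpa [hQ] using hjQ
      have hprod : ∏ i : Fin k, M (σ i) i = 0 :=
        Finset.prod_eq_zero (Finset.mem_univ j) hzero
      rw [hprod, smul_zero]
    · -- equal cardinalities: reindex to an honest block-diagonal matrix
      have hcard₁ : Fintype.card {i // (f i).isLeft} = Fintype.card {j // (g j).isLeft} := by
        rw [Fintype.card_subtype, Fintype.card_subtype]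
        exact hc
      have hcard₂ : Fintype.card {i // ¬ (f i).isLeft} = Fintype.card {j // ¬ (g j).isLeft} := by
        rw [Fintype.card_subtype_compl, Fintype.card_subtype_compl, hcard₁]
      let e₁ : {i // (f i).isLeft} ≃ {j // (g j).isLeft} := Fintype.equivOfCardEq hcard₁
      let e₂ : {i // ¬ (f i).isLeft} ≃ {j // ¬ (g j).isLeft} := Fintype.equivOfCardEq hcard₂
      let eR : ({j // (g j).isLeft} ⊕ {j // ¬ (g j).isLeft}) ≃ Fin k :=
        (Equiv.sumCongr e₁.symm e₂.symm).trans (Equiv.sumCompl _)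
      let eC : ({j // (g j).isLeft} ⊕ {j // ¬ (g j).isLeft}) ≃ Fin k :=
        Equiv.sumCompl _
      set N := M.submatrix eR eC with hN
      -- N is block diagonal
      have hNblocks : N = Matrix.fromBlocks
          (A₁.submatrix (fun i => (f (e₁.symm i).1).getLeft (e₁.symm i).2)
            (fun j => (g j.1).getLeft j.2)) 0 0
          (A₂.submatrix
            (fun i => (f (e₂.symm i).1).getRight (by
              have h := (e₂.symm i).2; rwa [Sum.not_isLeft] at h))
            (fun j => (g j.1).getRight (by
              have h := j.2; rwa [Sum.not_isLeft] at h))) := by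
        ext i j
        cases i with
        | inl i =>
          cases j with
          | inl j =>
            simp only [hN, Matrix.submatrix_apply, Matrix.fromBlocks_apply₁₁, hM]
            obtain ⟨x, hx⟩ := Sum.isLeft_iff.mp (e₁.symm i).2
            obtain ⟨y, hy⟩ := Sum.isLeft_iff.mp j.2
            simp [eR, eC, hx, hy]
          | inr j =>
            simp only [hN, Matrix.submatrix_apply, Matrix.fromBlocks_apply₁₂]
            apply hM0
            · exact (e₁.symm i).2
            · exact j.2
        | inr i =>
          cases j with
          | inl j =>
            simp only [hN, Matrix.submatrix_apply, Matrix.fromBlocks_apply₂₁]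
            apply hM0'
            · exact (e₂.symm i).2
            · exact j.2
          | inr j =>
            simp only [hN, Matrix.submatrix_apply, Matrix.fromBlocks_apply₂₂, hM]
            obtain ⟨x, hx⟩ := Sum.isRight_iff.mp (Sum.not_isLeft.mp (e₂.symm i).2)
            obtain ⟨y, hy⟩ := Sum.isRight_iff.mp (Sum.not_isLeft.mp j.2)
            simp [eR, eC, hx, hy]
      -- determinant bookkeeping
      have hdet : M.det = ((Equiv.Perm.sign (eR.trans eC.symm) : ℤ) : R) * N.det := by
        have h1 : N = (M.submatrix eC eC).submatrix (eR.trans eC.symm) id := by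
          ext i j
          simp [hN]
        rw [h1, Matrix.det_permute, Matrix.det_submatrix_equiv_self]
        have hs := Int.units_mul_self (Equiv.Perm.sign (eR.trans eC.symm))
        rcases Int.units_eq_one_or (Equiv.Perm.sign (eR.trans eC.symm)) with h | h <;>
          rw [h] <;> push_cast <;> ring
      rw [hdet]
      apply signType_range_unit_mul
      rw [hNblocks, Matrix.det_fromBlocks_zero₁₂]
      apply signType_range_mul
      · exact (Matrix.isTotallyUnimodular_iff_fintype _).mp hA₁ _ _ _
      · exact (Matrix.isTotallyUnimodular_iff_fintype _).mp hA₂ _ _ _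
    · -- more "left" rows than columns: det = 0
      refine ⟨0, ?_⟩
      rw [SignType.coe_zero, eq_comm, Matrix.det_apply]
      apply Finset.sum_eq_zero
      intro σ _
      have : ∃ j ∈ P.image σ.symm, j ∉ Q := by
        by_contra hcon
        push_neg at hcon
        have := Finset.card_le_card hcon
        rw [Finset.card_image_of_injective _ σ.symm.injective] at this
        omega
      obtain ⟨j, hjP, hjQ⟩ := this
      obtain ⟨i, hiP, hij⟩ := Finset.mem_image.mp hjP
      have hσj : σ j = i := by rw [← hij]; simp
      have hzero : M (σ j) j = 0 := by
        rw [hσj]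
        apply hM0
        · simpa [hP] using hiP
        · intro h; exact hjQ (by simp [hQ, h])
      have hprod : ∏ i : Fin k, M (σ i) i = 0 :=
        Finset.prod_eq_zero (Finset.mem_univ j) hzero
      rw [hprod, smul_zero]
end

section
/- Let Aℓ : Matrix Xℓ Yℓ ℚ, r : Yℓ → ℚ, Ar : Matrix Xr Yr ℚ, and c : Xr → ℚ. If the matrix obtained by appending r as an extra row to Aℓ (Matrix.fromRows Aℓ (row r)) is totally unimodular, and the matrix obtained by prepending c as an extra column to Ar (Matrix.fromCols (col c) Ar) is totally unimodular, then the 2-sum matrix Matrix.fromBlocks Aℓ 0 (fun i j => c i * r j) Ar is totally unimodular. -/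
/-!
A square submatrix of the 2-sum is, after reindexing, again a 2-sum `[[P, 0], [c rᵀ, Q]]` with
`P` an `a × p` submatrix of `Aₗ`, `Q` a `b × q` submatrix of `Aᵣ`, and `a + b = p + q`.
It factors as `[[P, 0], [0, 1]] · [[1, 0], [c rᵀ, Q]]` through `p + b` dimensions, and as
`[[1, 0], [0, [c | Q]]] · [[[P; r], 0], [0, 1]]` through `a + 1 + q` dimensions. So the
determinant vanishes when `p < a` or `p > a + 1`; for `p = a + 1` the second factorization is a
product of two square matrices, each a submatrix of a totally unimodular matrix; and for `p = a`
the matrix is block triangular with totally unimodular diagonal blocks `P` and `Q`.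
-/

open Matrix

universe u

section

variable {ι ι₁ ι₂ κ₁ κ₂ k l m n o R : Type*}

lemma mul_mem_range_signTypeCast [CommRing R] {x y : R} (hx : x ∈ Set.range SignType.cast)
    (hy : y ∈ Set.range SignType.cast) : x * y ∈ Set.range SignType.cast := by
  obtain ⟨s, rfl⟩ := hx
  obtain ⟨t, rfl⟩ := hy
  exact ⟨s * t, SignType.coe_mul s t⟩

lemma exists_eq_sumMap_comp_equiv {ι : Type u} {α β : Type*} [Fintype ι] (f : ι → α ⊕ β) :
    ∃ (ι₁ ι₂ : Type u) (_ : Fintype ι₁) (_ : Fintype ι₂) (e : ι ≃ ι₁ ⊕ ι₂) (f₁ : ι₁ → α)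
      (f₂ : ι₂ → β), f = Sum.map f₁ f₂ ∘ e := by
  refine ⟨{i // (f i).isLeft}, {i // ¬(f i).isLeft}, inferInstance, inferInstance,
    (Equiv.sumCompl _).symm, fun i => (f i).getLeft i.2,
    fun i => (f i).getRight (Sum.not_isLeft.mp i.2), funext fun i => ?_⟩
  by_cases h : (f i).isLeft
  · rw [Function.comp_apply, Equiv.sumCompl_symm_apply_of_pos (p := fun i => (f i).isLeft) h,
      Sum.map_inl, Sum.inl_getLeft]
  · rw [Function.comp_apply, Equiv.sumCompl_symm_apply_of_neg (p := fun i => (f i).isLeft) h,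
      Sum.map_inr, Sum.inr_getRight]

namespace Matrix

lemma det_submatrix_equiv_mem_range [CommRing R] [Fintype m] [DecidableEq m] [Fintype ι]
    [DecidableEq ι] {A : Matrix m m R} (hA : A.det ∈ Set.range SignType.cast) (e₁ e₂ : ι ≃ m) :
    (A.submatrix e₁ e₂).det ∈ Set.range SignType.cast := by
  rw [← e₁.symm_symm, ← e₂.symm_symm, ← reindex_apply, det_reindex]
  refine mul_mem_range_signTypeCast ?_ hA
  rcases Int.units_eq_one_or (Equiv.Perm.sign (e₂.symm.trans e₁.symm.symm)) with h | h <;>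
    rw [h]
  · exact ⟨1, by simp⟩
  · exact ⟨-1, by simp⟩

lemma fromBlocks_submatrix_sumMap (A : Matrix n l R) (B : Matrix n m R) (C : Matrix o l R)
    (D : Matrix o m R) (f₁ : ι₁ → n) (f₂ : ι₂ → o) (g₁ : κ₁ → l) (g₂ : κ₂ → m) :
    (fromBlocks A B C D).submatrix (Sum.map f₁ f₂) (Sum.map g₁ g₂) =
      fromBlocks (A.submatrix f₁ g₁) (B.submatrix f₁ g₂) (C.submatrix f₂ g₁)
        (D.submatrix f₂ g₂) := by
  ext (i | i) (j | j) <;> rfl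

lemma fromBlocks_zero₁₂_eq_mul [Semiring R] [Fintype l] [Fintype o] [DecidableEq l]
    [DecidableEq o] (A : Matrix n l R) (C : Matrix o l R) (D : Matrix o m R) :
    fromBlocks A 0 C D =
      fromBlocks A 0 0 (1 : Matrix o o R) * fromBlocks (1 : Matrix l l R) 0 C D := by
  rw [fromBlocks_multiply]
  simp

lemma det_submatrix_mul_eq_zero_of_card_lt [Field R] [Fintype k] [Fintype ι] [DecidableEq ι]
    (X : Matrix m k R) (Y : Matrix k n R) (f : ι → m) (g : ι → n)
    (h : Fintype.card k < Fintype.card ι) : ((X * Y).submatrix f g).det = 0 := by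
  rw [submatrix_mul X Y f id g Function.bijective_id]
  by_contra hdet
  have hrank := rank_of_det_ne_zero hdet
  have := rank_mul_le_left (X.submatrix f id) (Y.submatrix id g)
  have := rank_le_card_width (X.submatrix f id)
  omega

lemma IsTotallyUnimodular.det_submatrix_mul_mem_range [CommRing R] [Fintype k] [Fintype ι]
    [DecidableEq ι] {X : Matrix m k R} {Y : Matrix k n R} (hX : X.IsTotallyUnimodular)
    (hY : Y.IsTotallyUnimodular) (f : ι → m) (g : ι → n) (h : Fintype.card k = Fintype.card ι) :
    ((X * Y).submatrix f g).det ∈ Set.range SignType.cast := by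
  let e : ι ≃ k := Fintype.equivOfCardEq h.symm
  rw [← submatrix_mul_equiv X Y f e g, det_mul]
  exact mul_mem_range_signTypeCast ((isTotallyUnimodular_iff_fintype X).mp hX ι f e)
    ((isTotallyUnimodular_iff_fintype Y).mp hY ι e g)

lemma IsTotallyUnimodular.fromBlocks_one [CommRing R] [DecidableEq o] {A : Matrix m n R}
    (hA : A.IsTotallyUnimodular) : (fromBlocks A 0 0 (1 : Matrix o o R)).IsTotallyUnimodular := by
  classical
  rw [← fromRows_fromCols_eq_fromBlocks]
  refine IsTotallyUnimodular.fromRows_unitlike ?_ fun _ i => ⟨Sum.inr i, 1, ?_⟩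
  · simpa using (fromCols_replicateCol0_isTotallyUnimodular_iff (n' := o) A).mpr hA
  · ext (j | j) <;> simp [one_apply, Pi.single_apply, eq_comm]

lemma IsTotallyUnimodular.one_fromBlocks [CommRing R] [DecidableEq o] {A : Matrix m n R}
    (hA : A.IsTotallyUnimodular) : (fromBlocks (1 : Matrix o o R) 0 0 A).IsTotallyUnimodular := by
  simpa using hA.fromBlocks_one (o := o) |>.submatrix Sum.swap Sum.swap

lemma det_submatrix_fromBlocks_zero₁₂_mem_range [CommRing R] [Fintype ι] [DecidableEq ι]
    [Fintype ι₁] [Fintype ι₂] [Fintype κ₁] [Fintype κ₂] {A : Matrix ι₁ κ₁ R}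
    {D : Matrix ι₂ κ₂ R} (hA : A.IsTotallyUnimodular) (hD : D.IsTotallyUnimodular)
    (C : Matrix ι₂ κ₁ R) (h : Fintype.card κ₁ = Fintype.card ι₁) (e : ι ≃ ι₁ ⊕ ι₂)
    (e' : ι ≃ κ₁ ⊕ κ₂) :
    ((fromBlocks A 0 C D).submatrix e e').det ∈ Set.range SignType.cast := by
  classical
  have h₂ : Fintype.card κ₂ = Fintype.card ι₂ := by
    have := Fintype.card_congr e
    have := Fintype.card_congr e'
    simp only [Fintype.card_sum] at *
    omega
  let σ : κ₁ ≃ ι₁ := Fintype.equivOfCardEq h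
  let τ : κ₂ ≃ ι₂ := Fintype.equivOfCardEq h₂
  have hsquare : (fromBlocks A 0 C D).submatrix e e' =
      (fromBlocks (A.submatrix id σ.symm) 0 (C.submatrix id σ.symm)
        (D.submatrix id τ.symm)).submatrix e (e'.trans (σ.sumCongr τ)) := by
    ext i j
    rcases hi : e i with i | i <;> rcases hj : e' j with j | j <;> simp [hi, hj]
  rw [hsquare]
  refine det_submatrix_equiv_mem_range ?_ e _
  rw [det_fromBlocks_zero₁₂]
  exact mul_mem_range_signTypeCast ((isTotallyUnimodular_iff_fintype A).mp hA _ id σ.symm)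
    ((isTotallyUnimodular_iff_fintype D).mp hD _ id τ.symm)

end Matrix

def matrixSum2 [Mul R] [Zero R] (Aₗ : Matrix ι₁ κ₁ R) (r : κ₁ → R) (Aᵣ : Matrix ι₂ κ₂ R)
    (c : ι₂ → R) : Matrix (ι₁ ⊕ ι₂) (κ₁ ⊕ κ₂) R :=
  fromBlocks Aₗ 0 (vecMulVec c r) Aᵣ

lemma matrixSum2_submatrix_sumMap [Mul R] [Zero R] (Aₗ : Matrix ι₁ κ₁ R) (r : κ₁ → R)
    (Aᵣ : Matrix ι₂ κ₂ R) (c : ι₂ → R) (f₁ : m → ι₁) (f₂ : n → ι₂) (g₁ : k → κ₁)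
    (g₂ : l → κ₂) :
    (matrixSum2 Aₗ r Aᵣ c).submatrix (Sum.map f₁ f₂) (Sum.map g₁ g₂) =
      matrixSum2 (Aₗ.submatrix f₁ g₁) (r ∘ g₁) (Aᵣ.submatrix f₂ g₂) (c ∘ f₂) := by
  rw [matrixSum2, fromBlocks_submatrix_sumMap, submatrix_zero]
  rfl

lemma matrixSum2_eq_mul [CommRing R] [Fintype ι₁] [Fintype κ₂] [DecidableEq ι₁] [DecidableEq κ₂]
    (Aₗ : Matrix ι₁ κ₁ R) (r : κ₁ → R) (Aᵣ : Matrix ι₂ κ₂ R) (c : ι₂ → R) :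
    matrixSum2 Aₗ r Aᵣ c =
      fromBlocks (1 : Matrix ι₁ ι₁ R) 0 0 (fromCols (replicateCol Unit c) Aᵣ) *
        (fromBlocks (fromRows Aₗ (replicateRow Unit r)) 0 0 (1 : Matrix κ₂ κ₂ R)).submatrix
          (Equiv.sumAssoc ι₁ Unit κ₂).symm id := by
  ext (i | i) (j | j) <;> simp [matrixSum2, mul_apply, Fintype.sum_sum_type, one_apply, vecMulVec]

theorem det_submatrix_matrixSum2_mem_range [Field R] [Fintype ι] [DecidableEq ι] [Fintype ι₁]
    [Fintype ι₂] [Fintype κ₁] [Fintype κ₂] {Aₗ : Matrix ι₁ κ₁ R} {r : κ₁ → R}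
    {Aᵣ : Matrix ι₂ κ₂ R} {c : ι₂ → R}
    (hAₗ : (fromRows Aₗ (replicateRow Unit r)).IsTotallyUnimodular)
    (hAᵣ : (fromCols (replicateCol Unit c) Aᵣ).IsTotallyUnimodular) (e : ι ≃ ι₁ ⊕ ι₂)
    (e' : ι ≃ κ₁ ⊕ κ₂) :
    ((matrixSum2 Aₗ r Aᵣ c).submatrix e e').det ∈ Set.range SignType.cast := by
  classical
  have hrows : Fintype.card ι = Fintype.card ι₁ + Fintype.card ι₂ := by
    rw [Fintype.card_congr e, Fintype.card_sum]
  have hcols : Fintype.card ι = Fintype.card κ₁ + Fintype.card κ₂ := by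
    rw [Fintype.card_congr e', Fintype.card_sum]
  rcases lt_trichotomy (Fintype.card κ₁) (Fintype.card ι₁) with h | h | h
  · rw [matrixSum2, fromBlocks_zero₁₂_eq_mul, det_submatrix_mul_eq_zero_of_card_lt]
    · exact ⟨0, SignType.coe_zero⟩
    · simp only [Fintype.card_sum]
      omega
  · exact det_submatrix_fromBlocks_zero₁₂_mem_range (hAₗ.submatrix Sum.inl id)
      (hAᵣ.submatrix id Sum.inr) _ h e e'
  rw [matrixSum2_eq_mul]
  rcases (Nat.succ_le_of_lt h).eq_or_lt with h | h
  · refine hAᵣ.one_fromBlocks.det_submatrix_mul_mem_range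
      (hAₗ.fromBlocks_one.submatrix _ _) _ _ ?_
    simp only [Fintype.card_sum, Fintype.card_unit]
    omega
  · rw [det_submatrix_mul_eq_zero_of_card_lt]
    · exact ⟨0, SignType.coe_zero⟩
    · simp only [Fintype.card_sum, Fintype.card_unit]
      omega

end

/-- If appending the row `r` to `Aₗ` gives a totally unimodular matrix and prepending
the column `c` to `Aᵣ` gives a totally unimodular matrix, then the 2-sum matrix
`[[Aₗ, 0], [c ⊗ r, Aᵣ]]` is totally unimodular. -/
theorem matrixSum2_isTotallyUnimodular {Xₗ Yₗ Xᵣ Yᵣ : Type*}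
    (Aₗ : Matrix Xₗ Yₗ ℚ) (r : Yₗ → ℚ) (Aᵣ : Matrix Xᵣ Yᵣ ℚ) (c : Xᵣ → ℚ)
    (hAₗ : (Matrix.fromRows Aₗ (Matrix.replicateRow Unit r)).IsTotallyUnimodular)
    (hAᵣ : (Matrix.fromCols (Matrix.replicateCol Unit c) Aᵣ).IsTotallyUnimodular) :
    (Matrix.fromBlocks Aₗ 0 (fun i j => c i * r j) Aᵣ).IsTotallyUnimodular := by
  change (matrixSum2 Aₗ r Aᵣ c).IsTotallyUnimodular
  refine (isTotallyUnimodular_iff_fintype _).mpr fun (ι : Type) _ _ f g => ?_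
  obtain ⟨ι₁, ι₂, _, _, e, f₁, f₂, rfl⟩ := exists_eq_sumMap_comp_equiv f
  obtain ⟨κ₁, κ₂, _, _, e', g₁, g₂, rfl⟩ := exists_eq_sumMap_comp_equiv g
  rw [← submatrix_submatrix, matrixSum2_submatrix_sumMap]
  refine det_submatrix_matrixSum2_mem_range ?_ ?_ e e'
  · have hrows : fromRows (Aₗ.submatrix f₁ g₁) (replicateRow Unit (r ∘ g₁)) =
        (fromRows Aₗ (replicateRow Unit r)).submatrix (Sum.map f₁ id) g₁ := by
      ext (i | i) j <;> rfl
    exact hrows ▸ hAₗ.submatrix _ _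
  · have hcols : fromCols (replicateCol Unit (c ∘ f₂)) (Aᵣ.submatrix f₂ g₂) =
        (fromCols (replicateCol Unit c) Aᵣ).submatrix f₂ (Sum.map id g₂) := by
      ext i (j | j) <;> rfl
    exact hcols ▸ hAᵣ.submatrix _ _
end
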